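/- arXiv:1510.02061 — 3 statements merged into one kernel-verified Lean document; each statement's English description precedes it below -/
import Mathlib

section
/- Let B ⊆ A be a quasi-unital inclusion of C*-algebras, i.e., the set of products {b₁ a b₂ : b₁, b₂ ∈ B, a ∈ A} spans a norm-dense subspace of A. Then any approximate unit for B is an approximate unit for A. -/
/-!
Since the `ι (e i)` are uniformly bounded, left multiplication by them is an equicontinuous
family, so the elements `a` with `ι (e i) * a → a` form a closed subspace of `A`. It contains
every `ι b₁ * a * ι b₂`, because `ι (e i) * ι b₁ = ι (e i * b₁) → ι b₁` (star homomorphisms of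
C⋆-algebras are contractive, hence continuous). By quasi-unitality it is therefore all of `A`;
the right-hand side is symmetric.
-/

open Filter Topology

section NormBounded

variable {R : Type*} [NonUnitalSeminormedRing R] {I : Type*} {u : I → R} {C : ℝ}

theorem equicontinuous_mul_left_of_norm_le (hu : ∀ i, ‖u i‖ ≤ C) :
    Equicontinuous fun i (a : R) => u i * a :=
  Metric.equicontinuous_of_continuity_modulus (C * ·)
    (by simpa using (continuous_const_mul C).tendsto 0) _ fun a b i => by
      rw [dist_eq_norm, dist_eq_norm, ← mul_sub]
      exact (norm_mul_le _ _).trans (mul_le_mul_of_nonneg_right (hu i) (norm_nonneg _))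

theorem equicontinuous_mul_right_of_norm_le (hu : ∀ i, ‖u i‖ ≤ C) :
    Equicontinuous fun i (a : R) => a * u i :=
  Metric.equicontinuous_of_continuity_modulus (C * ·)
    (by simpa using (continuous_const_mul C).tendsto 0) _ fun a b i => by
      rw [dist_eq_norm, dist_eq_norm, ← sub_mul, mul_comm C]
      exact (norm_mul_le _ _).trans (mul_le_mul_of_nonneg_left (hu i) (norm_nonneg _))

theorem isClosed_setOf_tendsto_mul_left (l : Filter I) (hu : ∀ i, ‖u i‖ ≤ C) :
    IsClosed {a : R | Tendsto (fun i => u i * a) l (𝓝 a)} :=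
  (equicontinuous_mul_left_of_norm_le hu).isClosed_setOfPred_tendsto continuous_id

theorem isClosed_setOf_tendsto_mul_right (l : Filter I) (hu : ∀ i, ‖u i‖ ≤ C) :
    IsClosed {a : R | Tendsto (fun i => a * u i) l (𝓝 a)} :=
  (equicontinuous_mul_right_of_norm_le hu).isClosed_setOfPred_tendsto continuous_id

end NormBounded

section TendstoMulSubmodule

variable (𝕜 : Type*) {R : Type*} [Semiring 𝕜] [NonUnitalNonAssocSemiring R] [TopologicalSpace R]
  [ContinuousAdd R] [Module 𝕜 R] [ContinuousConstSMul 𝕜 R] {I : Type*} (l : Filter I) (u : I → R)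

section Left

variable [SMulCommClass 𝕜 R R]

def tendstoMulLeftSubmodule : Submodule 𝕜 R where
  carrier := {a | Tendsto (fun i => u i * a) l (𝓝 a)}
  add_mem' {a b} ha hb := by simpa only [Set.mem_ofPred_eq, mul_add] using ha.add hb
  zero_mem' := by simpa only [Set.mem_ofPred_eq, mul_zero] using tendsto_const_nhds
  smul_mem' c a ha := by simpa only [Set.mem_ofPred_eq, mul_smul_comm] using ha.const_smul c

theorem mem_tendstoMulLeftSubmodule {a : R} :
    a ∈ tendstoMulLeftSubmodule 𝕜 l u ↔ Tendsto (fun i => u i * a) l (𝓝 a) :=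
  Iff.rfl

end Left

section Right

variable [IsScalarTower 𝕜 R R]

def tendstoMulRightSubmodule : Submodule 𝕜 R where
  carrier := {a | Tendsto (fun i => a * u i) l (𝓝 a)}
  add_mem' {a b} ha hb := by simpa only [Set.mem_ofPred_eq, add_mul] using ha.add hb
  zero_mem' := by simpa only [Set.mem_ofPred_eq, zero_mul] using tendsto_const_nhds
  smul_mem' c a ha := by simpa only [Set.mem_ofPred_eq, smul_mul_assoc] using ha.const_smul c

theorem mem_tendstoMulRightSubmodule {a : R} :
    a ∈ tendstoMulRightSubmodule 𝕜 l u ↔ Tendsto (fun i => a * u i) l (𝓝 a) :=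
  Iff.rfl

end Right

end TendstoMulSubmodule

theorem quasiUnital_approximateUnit_general
    {A B : Type*} [NonUnitalCStarAlgebra A] [NonUnitalCStarAlgebra B]
    (ι : B →⋆ₙₐ[ℂ] A)
    -- quasi-unitality: the closed span of B·A·B is all of A
    (hqu : closure (Submodule.span ℂ
      {x : A | ∃ (b₁ b₂ : B) (a : A), x = ι b₁ * a * ι b₂} : Set A) = Set.univ)
    -- an approximate unit for B: a net of positive elements of norm at most 1
    {I : Type*} (l : Filter I) (e : I → B)
    (he_norm : ∀ i, ‖e i‖ ≤ 1)
    (he_left : ∀ b : B, Tendsto (fun i => e i * b) l (𝓝 b))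
    (he_right : ∀ b : B, Tendsto (fun i => b * e i) l (𝓝 b)) :
    (∀ a : A, Tendsto (fun i => ι (e i) * a) l (𝓝 a)) ∧
      (∀ a : A, Tendsto (fun i => a * ι (e i)) l (𝓝 a)) := by
  have hι : Continuous ι :=
    AddMonoidHomClass.continuous_of_bound ι 1 (by simpa using NonUnitalStarAlgHom.norm_apply_le ι)
  have hnorm (i : I) : ‖ι (e i)‖ ≤ 1 := (NonUnitalStarAlgHom.norm_apply_le ι _).trans (he_norm i)
  have hleft : {x : A | ∃ (b₁ b₂ : B) (a : A), x = ι b₁ * a * ι b₂} ⊆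
      tendstoMulLeftSubmodule ℂ l fun i => ι (e i) := by
    rintro _ ⟨b₁, b₂, a, rfl⟩
    rw [SetLike.mem_coe, mem_tendstoMulLeftSubmodule]
    simpa only [Function.comp_def, map_mul, mul_assoc] using
      (((hι.tendsto b₁).comp (he_left b₁)).mul_const a).mul_const (ι b₂)
  have hright : {x : A | ∃ (b₁ b₂ : B) (a : A), x = ι b₁ * a * ι b₂} ⊆
      tendstoMulRightSubmodule ℂ l fun i => ι (e i) := by
    rintro _ ⟨b₁, b₂, a, rfl⟩
    rw [SetLike.mem_coe, mem_tendstoMulRightSubmodule]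
    simpa only [Function.comp_def, map_mul, mul_assoc] using
      ((hι.tendsto b₂).comp (he_right b₂)).const_mul (ι b₁ * a)
  refine ⟨fun a => ?_, fun a => ?_⟩
  · exact closure_minimal (Submodule.span_le.mpr hleft) (isClosed_setOf_tendsto_mul_left l hnorm)
      (hqu ▸ Set.mem_univ a)
  · exact closure_minimal (Submodule.span_le.mpr hright) (isClosed_setOf_tendsto_mul_right l hnorm)
      (hqu ▸ Set.mem_univ a)

theorem quasiUnital_approximateUnit
    {A B : Type*} [NonUnitalCStarAlgebra A] [NonUnitalCStarAlgebra B]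
    (ι : B →⋆ₙₐ[ℂ] A) (hι : Isometry ι)
    -- quasi-unitality: the closed span of B·A·B is all of A
    (hqu : closure (Submodule.span ℂ
      {x : A | ∃ (b₁ b₂ : B) (a : A), x = ι b₁ * a * ι b₂} : Set A) = Set.univ)
    -- an approximate unit for B: a net of positive elements of norm at most 1
    {I : Type*} (l : Filter I) [l.NeBot] (e : I → B)
    (he_pos : ∀ i, ∃ c : B, e i = star c * c)
    (he_norm : ∀ i, ‖e i‖ ≤ 1)
    (he_left : ∀ b : B, Tendsto (fun i => e i * b) l (𝓝 b))
    (he_right : ∀ b : B, Tendsto (fun i => b * e i) l (𝓝 b)) :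
    (∀ a : A, Tendsto (fun i => ι (e i) * a) l (𝓝 a)) ∧
      (∀ a : A, Tendsto (fun i => a * ι (e i)) l (𝓝 a)) :=
  quasiUnital_approximateUnit_general ι hqu l e he_norm he_left he_right
end

section
/- Let B ⊆ A be a quasi-unital inclusion of C*-algebras. Then A is unital if and only if B is unital, and in that case they have the same unit. -/
/-!
If `f` is a unit of `B`, multiplication by `ι f` fixes every product `ι b₁ * a * ι b₂`, hence by
continuity all of `A`. Conversely, if `e` is a unit of `A`, an approximate unit `(u_λ)` of `B`
satisfies `ι u_λ * a → a` on the dense span of these products and, being contractive, on all of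
`A`; thus `ι u_λ = ι u_λ * e → e`, so `e` lies in the closed range of the isometry `ι`.
-/

open Filter Topology

section NormedRing

variable {𝕜 A : Type*}

lemma isClosed_setOf_tendsto_mul_self {X : Type*} [NonUnitalSeminormedRing A] {l : Filter X}
    {g : X → A} (hg : ∀ᶠ x in l, ‖g x‖ ≤ 1) :
    IsClosed {a : A | Tendsto (fun x ↦ g x * a) l (𝓝 a)} := by
  refine isClosed_of_closure_subset fun a ha ↦ Metric.tendsto_nhds.mpr fun ε hε ↦ ?_
  obtain ⟨s, hs, has⟩ := Metric.mem_closure_iff.mp ha (ε / 3) (by positivity)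
  filter_upwards [Metric.tendsto_nhds.mp hs (ε / 3) (by positivity), hg] with x hxs hgx
  have hmul : dist (g x * a) (g x * s) ≤ dist a s := by
    rw [dist_eq_norm, dist_eq_norm, ← mul_sub]
    exact (norm_mul_le _ _).trans (mul_le_of_le_one_left (norm_nonneg _) hgx)
  calc dist (g x * a) a ≤ dist (g x * a) (g x * s) + dist (g x * s) s + dist s a :=
        dist_triangle4 _ _ _ _
    _ < ε := by rw [dist_comm s a]; linarith

lemma tendsto_mul_self_of_dense_span [NormedField 𝕜] [NonUnitalSeminormedRing A]
    [NormedSpace 𝕜 A] [SMulCommClass 𝕜 A A] {X : Type*} {l : Filter X} {g : X → A}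
    {S : Set A} (hS : Dense (Submodule.span 𝕜 S : Set A)) (hg : ∀ᶠ x in l, ‖g x‖ ≤ 1)
    (hgS : ∀ s ∈ S, Tendsto (fun x ↦ g x * s) l (𝓝 s)) (a : A) :
    Tendsto (fun x ↦ g x * a) l (𝓝 a) := by
  have hspan : (Submodule.span 𝕜 S : Set A) ⊆ {a | Tendsto (fun x ↦ g x * a) l (𝓝 a)} := by
    intro a ha
    induction ha using Submodule.span_induction with
    | mem s hs => exact hgS s hs
    | zero => simpa using tendsto_const_nhds
    | add s t _ _ hs ht => simpa only [Set.mem_ofPred_eq, mul_add] using hs.add ht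
    | smul c s _ hs => simpa only [Set.mem_ofPred_eq, mul_smul_comm] using hs.const_smul c
  exact (isClosed_setOf_tendsto_mul_self hg).closure_subset_iff.mpr hspan (hS a)

lemma forall_mul_eq_self_of_dense_span [NontriviallyNormedField 𝕜] [NonUnitalSeminormedRing A]
    [NormedSpace 𝕜 A] [IsScalarTower 𝕜 A A] [SMulCommClass 𝕜 A A] [T2Space A] {S : Set A}
    (hS : Dense (Submodule.span 𝕜 S : Set A)) {e : A} (he : ∀ s ∈ S, e * s = s ∧ s * e = s)
    (a : A) : e * a = a ∧ a * e = a := by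
  have hleft : ContinuousLinearMap.mul 𝕜 A e = .id 𝕜 A :=
    ContinuousLinearMap.ext_on hS fun s hs ↦ (he s hs).1
  have hright : (ContinuousLinearMap.mul 𝕜 A).flip e = .id 𝕜 A :=
    ContinuousLinearMap.ext_on hS fun s hs ↦ (he s hs).2
  exact ⟨congr($hleft a), congr($hright a)⟩

end NormedRing

section QuasiUnital

variable {𝕜 A B F : Type*} [NonUnitalNormedRing A] [FunLike F B A] {ι : F}

lemma map_mul_eq_self_of_dense_span [NonUnitalNonAssocSemiring B] [NonUnitalRingHomClass F B A]
    [NontriviallyNormedField 𝕜] [NormedSpace 𝕜 A]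
    [IsScalarTower 𝕜 A A] [SMulCommClass 𝕜 A A]
    (hqu : Dense (Submodule.span 𝕜 {x : A | ∃ (b₁ b₂ : B) (a : A), x = ι b₁ * a * ι b₂} : Set A))
    {f : B} (hf : ∀ b : B, f * b = b ∧ b * f = b) (a : A) :
    ι f * a = a ∧ a * ι f = a := by
  refine forall_mul_eq_self_of_dense_span hqu (fun _ ⟨b₁, b₂, a, hx⟩ ↦ ?_) a
  subst hx
  constructor
  · rw [← mul_assoc, ← mul_assoc, ← map_mul, (hf b₁).1]
  · rw [mul_assoc, ← map_mul, (hf b₂).2]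

lemma tendsto_map_mul_of_dense_span [NonUnitalNormedRing B] [NonUnitalRingHomClass F B A]
    [NormedField 𝕜] [NormedSpace 𝕜 A] [SMulCommClass 𝕜 A A]
    (hqu : Dense (Submodule.span 𝕜 {x : A | ∃ (b₁ b₂ : B) (a : A), x = ι b₁ * a * ι b₂} : Set A))
    (hι : Isometry ι) {l : Filter B} (hl : ∀ b, Tendsto (· * b) l (𝓝 b))
    (hl_norm : ∀ᶠ u in l, ‖u‖ ≤ 1) (a : A) :
    Tendsto (fun u ↦ ι u * a) l (𝓝 a) := by
  refine tendsto_mul_self_of_dense_span hqu ?_ (fun _ ⟨b₁, b₂, a, hx⟩ ↦ ?_) a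
  · simpa only [hι.norm_map_of_map_zero (map_zero ι)] using hl_norm
  · subst hx
    have hlim : Tendsto (fun u ↦ ι (u * b₁) * (a * ι b₂)) l (𝓝 (ι b₁ * (a * ι b₂))) :=
      ((hι.continuous.tendsto b₁).comp (hl b₁)).mul_const _
    simpa only [map_mul, mul_assoc] using hlim

end QuasiUnital

lemma exists_map_eq_of_dense_span {A B F : Type*} [NonUnitalNormedRing A] [NormedSpace ℂ A]
    [SMulCommClass ℂ A A] [NonUnitalCStarAlgebra B] [FunLike F B A] [NonUnitalRingHomClass F B A]
    {ι : F}
    (hqu : Dense (Submodule.span ℂ {x : A | ∃ (b₁ b₂ : B) (a : A), x = ι b₁ * a * ι b₂} : Set A))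
    (hι : Isometry ι) {e : A} (he : ∀ a : A, e * a = a ∧ a * e = a) :
    ∃ f : B, ι f = e := by
  let _ := CStarAlgebra.spectralOrder B
  have _ := CStarAlgebra.spectralOrderedRing B
  have hl := CStarAlgebra.increasingApproximateUnit B
  have hlim : Tendsto ι (CStarAlgebra.approximateUnit B) (𝓝 e) := by
    simpa only [fun u ↦ (he (ι u)).2] using
      tendsto_map_mul_of_dense_span hqu hι hl.tendsto_mul_right hl.eventually_norm e
  exact hι.isClosedEmbedding.isClosed_range.mem_of_tendsto hlim (.of_forall Set.mem_range_self)

theorem quasiUnital_unital_iff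
    {A B : Type*} [NonUnitalCStarAlgebra A] [NonUnitalCStarAlgebra B]
    (ι : B →⋆ₙₐ[ℂ] A) (hι : Isometry ι)
    (hqu : closure (Submodule.span ℂ
      {x : A | ∃ (b₁ b₂ : B) (a : A), x = ι b₁ * a * ι b₂} : Set A) = Set.univ) :
    ((∃ e : A, ∀ a : A, e * a = a ∧ a * e = a) ↔
      (∃ f : B, ∀ b : B, f * b = b ∧ b * f = b)) ∧
    (∀ (e : A) (f : B), (∀ a : A, e * a = a ∧ a * e = a) →
      (∀ b : B, f * b = b ∧ b * f = b) → e = ι f) := by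
  have hdense := dense_iff_closure_eq.mpr hqu
  refine ⟨⟨fun ⟨e, he⟩ ↦ ?_, fun ⟨f, hf⟩ ↦ ⟨ι f, map_mul_eq_self_of_dense_span hdense hf⟩⟩, ?_⟩
  · obtain ⟨f, rfl⟩ := exists_map_eq_of_dense_span hdense hι he
    refine ⟨f, fun b ↦ ⟨hι.injective ?_, hι.injective ?_⟩⟩
    · rw [map_mul, (he (ι b)).1]
    · rw [map_mul, (he (ι b)).2]
  · intro e f he hf
    calc e = e * ι f := (map_mul_eq_self_of_dense_span hdense hf e).2.symm
      _ = ι f := (he (ι f)).1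
end

section
/- Let (A, E) be the reduced amalgamated free product of {(Aᵢ, E^{Aᵢ}_B)}_{i∈{1,2}} over B, and let E_{A₁} : A → A₁ be the canonical conditional expectation. Then for every m ≥ 1, every alternating sequence ι ∈ I_m (meaning ι(k) ≠ ι(k+1)) with ι(m) ≠ 1, and all xₖ ∈ ker E^{A_{ι(k)}}_B (1 ≤ k ≤ m), the element x = x₁x₂⋯x_m satisfies E_{A₁}(x*x) = E(x*x). -/
/-!
Let `w = x₁ ⋯ x_m` end with a letter from `A_j`, and let `W_j` be the set of alternating words of
kernel letters that begin and end with a letter from `A_j`. By induction on `m`, `w* w` lies in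
`B + span W_j`: conjugating `b + v` (with `v ∈ span W_i`, `i ≠ j`) by a kernel letter `x ∈ A_j`
gives `x* b x ∈ A_j`, which is `E_j(x* b x)` plus a kernel letter, and `x* v x ∈ span W_j`.
Both `E` and, since `j ≠ 1`, `E_{A₁}` vanish on `W_j`, so both return the `B`-component of `w* w`.
-/

structure IsCondExp {A B : Type*} [NonUnitalCStarAlgebra A] [NonUnitalCStarAlgebra B]
    (ι : B →⋆ₙₐ[ℂ] A) (E : A →ₗ[ℂ] B) : Prop where
  projection : ∀ b : B, E (ι b) = b
  bimodule : ∀ (b₁ b₂ : B) (x : A), E (ι b₁ * x * ι b₂) = b₁ * E x * b₂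
  contractive : ∀ x : A, ‖E x‖ ≤ ‖x‖
  positive : ∀ x : A, ∃ y : B, E (star x * x) = star y * y

/-- `wordProd x n = x 0 * x 1 * ⋯ * x n`. -/
def wordProd {R : Type*} [Mul R] (x : ℕ → R) : ℕ → R
  | 0 => x 0
  | (n + 1) => wordProd x n * x (n + 1)

lemma IsCondExp.map_star {A B : Type*} [NonUnitalCStarAlgebra A] [NonUnitalCStarAlgebra B]
    {ι : B →⋆ₙₐ[ℂ] A} {E : A →ₗ[ℂ] B} (h : IsCondExp ι E) (x : A) :
    E (star x) = star (E x) := by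
  -- ordered by the spectral order, `E` is a positive ℂ-linear map, hence ⋆-preserving
  let := CStarAlgebra.spectralOrder A
  let := CStarAlgebra.spectralOrder B
  have := CStarAlgebra.spectralOrderedRing A
  have := CStarAlgebra.spectralOrderedRing B
  have map_nonneg (a : A) (ha : 0 ≤ a) : 0 ≤ E a := by
    obtain ⟨s, rfl⟩ := CStarAlgebra.nonneg_iff_eq_star_mul_self.mp ha
    obtain ⟨y, hy⟩ := h.positive s
    exact hy ▸ star_mul_self_nonneg y
  exact StarHomClass.map_star (PositiveLinearMap.mk₀ E map_nonneg) x

lemma mul_mul_mem_span_of_forall {𝕜 R : Type*} [CommSemiring 𝕜] [NonUnitalNonAssocSemiring R]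
    [Module 𝕜 R] [SMulCommClass 𝕜 R R] [IsScalarTower 𝕜 R R] {S T : Set R} (s t : R)
    (h : ∀ r ∈ S, s * r * t ∈ Submodule.span 𝕜 T) {v : R} (hv : v ∈ Submodule.span 𝕜 S) :
    s * v * t ∈ Submodule.span 𝕜 T :=
  (Submodule.span_le (p := (Submodule.span 𝕜 T).comap
    (LinearMap.mulRight 𝕜 t ∘ₗ LinearMap.mulLeft 𝕜 s))).mpr h hv

section wordProd

variable {R : Type*}

lemma wordProd_congr [Mul R] {x y : ℕ → R} {n : ℕ} (h : ∀ k ≤ n, x k = y k) :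
    wordProd x n = wordProd y n := by
  induction n with
  | zero => exact h 0 le_rfl
  | succ n ih =>
    rw [wordProd, wordProd, ih fun k hk => h k (by omega), h (n + 1) le_rfl]

lemma wordProd_cons [Semigroup R] (s : R) (y : ℕ → R) (n : ℕ) :
    wordProd (Stream'.cons s y) (n + 1) = s * wordProd y n := by
  induction n with
  | zero => rfl
  | succ n ih =>
    change wordProd _ (n + 1) * y (n + 1) = s * (wordProd y n * y (n + 1))
    rw [ih, mul_assoc]

lemma wordProd_update_succ [Mul R] (y : ℕ → R) (n : ℕ) (t : R) :
    wordProd (Function.update y (n + 1) t) (n + 1) = wordProd y n * t := by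
  rw [wordProd, Function.update_self,
    wordProd_congr fun k hk => Function.update_of_ne (by omega) t y]

end wordProd

section FreeProduct

variable {I B R : Type*} {A : I → Type*} [NonUnitalCStarAlgebra B]
  [∀ i, NonUnitalCStarAlgebra (A i)] [NonUnitalCStarAlgebra R]
  {ιB : ∀ i, B →⋆ₙₐ[ℂ] A i} (g : ∀ i, A i →⋆ₙₐ[ℂ] R) (Ei : ∀ i, A i →ₗ[ℂ] B)

def altKerWords (i j : I) : Set R :=
  {r | ∃ (p : ℕ) (ι : ℕ → I) (y : ℕ → R), ι 0 = i ∧ ι p = j ∧ (∀ k < p, ι k ≠ ι (k + 1)) ∧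
    (∀ k ≤ p, ∃ a : A (ι k), Ei (ι k) a = 0 ∧ y k = g (ι k) a) ∧ r = wordProd y p}

variable {g Ei}

lemma letter_mem_altKerWords {j : I} {a : A j} (ha : Ei j a = 0) :
    g j a ∈ altKerWords g Ei j j :=
  ⟨0, fun _ => j, fun _ => g j a, rfl, rfl, by simp, fun _ _ => ⟨a, ha, rfl⟩, rfl⟩

lemma letter_mul_mem_altKerWords {i j l : I} (hji : j ≠ i) {a : A j} (ha : Ei j a = 0) {r : R}
    (hr : r ∈ altKerWords g Ei i l) : g j a * r ∈ altKerWords g Ei j l := by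
  obtain ⟨p, ι, y, h0, hp, halt, hker, rfl⟩ := hr
  refine ⟨p + 1, Stream'.cons j ι, Stream'.cons (g j a) y, rfl, hp, ?_, ?_,
    (wordProd_cons _ _ _).symm⟩
  · rintro (_ | k) hk
    · change j ≠ ι 0
      rwa [h0]
    · exact halt k (by omega)
  · rintro (_ | k) hk
    · exact ⟨a, ha, rfl⟩
    · exact hker k (by omega)

lemma mul_letter_mem_altKerWords {i j l : I} (hlj : l ≠ j) {a : A j} (ha : Ei j a = 0) {r : R}
    (hr : r ∈ altKerWords g Ei i l) : r * g j a ∈ altKerWords g Ei i j := by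
  obtain ⟨p, ι, y, h0, hp, halt, hker, rfl⟩ := hr
  refine ⟨p + 1, Function.update ι (p + 1) j, Function.update y (p + 1) (g j a), ?_,
    Function.update_self .., ?_, ?_, (wordProd_update_succ _ _ _).symm⟩
  · rwa [Function.update_of_ne (by omega)]
  · intro k hk
    rw [Function.update_of_ne (by omega)]
    obtain hk | rfl : k < p ∨ k = p := by omega
    · rw [Function.update_of_ne (by omega)]
      exact halt k hk
    · rw [Function.update_self, hp]
      exact hlj
  · intro k hk
    obtain hk | rfl : k ≤ p ∨ k = p + 1 := by omega
    · rw [Function.update_of_ne (by omega), Function.update_of_ne (by omega)]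
      exact hker k hk
    · rw [Function.update_self, Function.update_self]
      exact ⟨a, ha, rfl⟩

lemma sub_mem_altKerWords {j : I} (hEj : IsCondExp (ιB j) (Ei j)) (c : A j) :
    g j c - g j (ιB j (Ei j c)) ∈ altKerWords g Ei j j := by
  rw [← map_sub]
  exact letter_mem_altKerWords (by rw [map_sub, hEj.projection, sub_self])

lemma star_mul_mul_mem_altKerWords (hEi : ∀ i, IsCondExp (ιB i) (Ei i)) {i j : I} (hij : i ≠ j)
    {a : A j} (ha : Ei j a = 0) {r : R} (hr : r ∈ altKerWords g Ei i i) :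
    g j (star a) * r * g j a ∈ altKerWords g Ei j j :=
  mul_letter_mem_altKerWords hij ha <| letter_mul_mem_altKerWords hij.symm
    (by rw [(hEi j).map_star, ha, star_zero]) hr

lemma exists_star_wordProd_mul_self_sub_mem_span
    (hcompat : ∀ i j, (g i).comp (ιB i) = (g j).comp (ιB j))
    (hEi : ∀ i, IsCondExp (ιB i) (Ei i)) (n : ℕ) (ι : ℕ → I) (x : ℕ → R)
    (halt : ∀ k < n, ι k ≠ ι (k + 1))
    (hker : ∀ k ≤ n, ∃ a : A (ι k), Ei (ι k) a = 0 ∧ x k = g (ι k) a) :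
    ∃ b : B, star (wordProd x n) * wordProd x n - g (ι n) (ιB (ι n) b)
      ∈ Submodule.span ℂ (altKerWords g Ei (ι n) (ι n)) := by
  induction n with
  | zero =>
    obtain ⟨a, -, hx⟩ := hker 0 le_rfl
    refine ⟨Ei (ι 0) (star a * a), Submodule.subset_span ?_⟩
    rw [wordProd, hx, ← map_star, ← map_mul]
    exact sub_mem_altKerWords (hEi _) _
  | succ n ih =>
    obtain ⟨b, hb⟩ := ih (fun k hk => halt k (by omega)) (fun k hk => hker k (by omega))
    set i := ι n
    set j := ι (n + 1)
    obtain ⟨a, ha, hx⟩ := hker (n + 1) le_rfl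
    set c := star a * ιB j b * a
    have hB : g j (star a) * g i (ιB i b) * g j a = g j c := by
      rw [← NonUnitalStarAlgHom.comp_apply, hcompat i j, NonUnitalStarAlgHom.comp_apply,
        ← map_mul, ← map_mul]
    have hsplit : star (wordProd x (n + 1)) * wordProd x (n + 1) - g j (ιB j (Ei j c))
        = (g j c - g j (ιB j (Ei j c)))
          + g j (star a) * (star (wordProd x n) * wordProd x n - g i (ιB i b)) * g j a := by
      rw [wordProd, hx, star_mul, ← map_star, ← hB]
      noncomm_ring
    refine ⟨Ei j c, hsplit ▸ add_mem (Submodule.subset_span (sub_mem_altKerWords (hEi j) c))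
      (mul_mul_mem_span_of_forall _ _ (fun r hr => Submodule.subset_span ?_) hb)⟩
    exact star_mul_mul_mem_altKerWords hEi (halt n (by omega)) ha hr

end FreeProduct

theorem reduced_amalg_EA1_of_word_general
    {B : Type*} [NonUnitalCStarAlgebra B]
    {A : Fin 2 → Type*} [∀ i, NonUnitalCStarAlgebra (A i)]
    {R : Type*} [NonUnitalCStarAlgebra R]   -- R = the reduced amalgamated free product
    (ιB : ∀ i, B →⋆ₙₐ[ℂ] A i) (g : ∀ i, A i →⋆ₙₐ[ℂ] R)
    (hcompat : ∀ i j : Fin 2, (g i).comp (ιB i) = (g j).comp (ιB j))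
    (Ei : ∀ i, A i →ₗ[ℂ] B) (hEi : ∀ i, IsCondExp (ιB i) (Ei i))
    (E : R →ₗ[ℂ] B) (hE : IsCondExp ((g 0).comp (ιB 0)) E)
    -- freeness: E vanishes on alternating words of kernel elements
    (hfree : ∀ (m : ℕ) (ι : ℕ → Fin 2) (x : ℕ → R), 1 ≤ m →
      (∀ k, k + 1 < m → ι k ≠ ι (k + 1)) →
      (∀ k < m, ∃ a : A (ι k), Ei (ι k) a = 0 ∧ x k = g (ι k) a) →
      E (wordProd x (m - 1)) = 0)
    -- the canonical conditional expectation E_{A₁} : R → A₁ (= A 0), given by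
    -- compression to L²(A₁) in the GNS representation of E
    (EA1 : R →ₗ[ℂ] A 0) (hEA1 : IsCondExp (g 0) EA1)
    -- E_{A₁} agrees with E (valued in B ⊆ A₁) on alternating kernel words
    -- not ending in index 1 (= `0 : Fin 2` here)
    (hEA1word : ∀ (m : ℕ) (ι : ℕ → Fin 2) (x : ℕ → R), 1 ≤ m →
      (∀ k, k + 1 < m → ι k ≠ ι (k + 1)) →
      (∀ k < m, ∃ a : A (ι k), Ei (ι k) a = 0 ∧ x k = g (ι k) a) →
      ι (m - 1) ≠ 0 →
      EA1 (wordProd x (m - 1)) = ιB 0 (E (wordProd x (m - 1)))) :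
    -- conclusion: E_{A₁}(x* x) = E(x* x) for such words x
    ∀ (m : ℕ) (ι : ℕ → Fin 2) (x : ℕ → R), 1 ≤ m →
      (∀ k, k + 1 < m → ι k ≠ ι (k + 1)) →
      (∀ k < m, ∃ a : A (ι k), Ei (ι k) a = 0 ∧ x k = g (ι k) a) →
      ι (m - 1) ≠ 0 →
      EA1 (star (wordProd x (m - 1)) * wordProd x (m - 1))
        = ιB 0 (E (star (wordProd x (m - 1)) * wordProd x (m - 1))) := by
  intro m ι x hm halt hker hlast
  obtain ⟨n, rfl⟩ : ∃ n, m = n + 1 := ⟨m - 1, by omega⟩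
  simp only [Nat.add_sub_cancel] at hlast ⊢
  obtain ⟨b, hb⟩ := exists_star_wordProd_mul_self_sub_mem_span hcompat hEi n ι x
    (fun k hk => halt k (by omega)) (fun k hk => hker k (by omega))
  have hE_words : altKerWords g Ei (ι n) (ι n) ⊆ LinearMap.ker E := by
    rintro _ ⟨p, ι', y, -, -, halt', hker', rfl⟩
    simpa using hfree (p + 1) ι' y (by omega) (fun k hk => halt' k (by omega))
      (fun k hk => hker' k (by omega))
  have hEA1_words : altKerWords g Ei (ι n) (ι n) ⊆ LinearMap.ker EA1 := by
    intro r hr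
    have hEr : E r = 0 := hE_words hr
    obtain ⟨p, ι', y, -, hp, halt', hker', rfl⟩ := hr
    have hword := hEA1word (p + 1) ι' y (by omega) (fun k hk => halt' k (by omega))
      (fun k hk => hker' k (by omega)) (by simpa [hp] using hlast)
    simp only [Nat.add_sub_cancel] at hword
    change EA1 _ = 0
    rw [hword, hEr, map_zero]
  have hB : g (ι n) (ιB (ι n) b) = g 0 (ιB 0 b) :=
    DFunLike.congr_fun (hcompat (ι n) 0) b
  have hEv := Submodule.span_le.mpr hE_words hb
  have hEA1v := Submodule.span_le.mpr hEA1_words hb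
  rw [LinearMap.mem_ker, map_sub, sub_eq_zero, hB] at hEv hEA1v
  rw [hEv, hEA1v, hEA1.projection]
  simpa using (congrArg (ιB 0) (hE.projection b)).symm

theorem reduced_amalg_EA1_of_word
    {B : Type*} [NonUnitalCStarAlgebra B]
    {A : Fin 2 → Type*} [∀ i, NonUnitalCStarAlgebra (A i)]
    {R : Type*} [NonUnitalCStarAlgebra R]   -- R = the reduced amalgamated free product
    (ιB : ∀ i, B →⋆ₙₐ[ℂ] A i) (g : ∀ i, A i →⋆ₙₐ[ℂ] R)
    (hg : ∀ i, Isometry (g i)) (hιB : ∀ i, Isometry (ιB i))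
    (hcompat : ∀ i j : Fin 2, (g i).comp (ιB i) = (g j).comp (ιB j))
    (Ei : ∀ i, A i →ₗ[ℂ] B) (hEi : ∀ i, IsCondExp (ιB i) (Ei i))
    (E : R →ₗ[ℂ] B) (hE : IsCondExp ((g 0).comp (ιB 0)) E)
    -- freeness: E vanishes on alternating words of kernel elements
    (hfree : ∀ (m : ℕ) (ι : ℕ → Fin 2) (x : ℕ → R), 1 ≤ m →
      (∀ k, k + 1 < m → ι k ≠ ι (k + 1)) →
      (∀ k < m, ∃ a : A (ι k), Ei (ι k) a = 0 ∧ x k = g (ι k) a) →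
      E (wordProd x (m - 1)) = 0)
    -- the canonical conditional expectation E_{A₁} : R → A₁ (= A 0), given by
    -- compression to L²(A₁) in the GNS representation of E
    (EA1 : R →ₗ[ℂ] A 0) (hEA1 : IsCondExp (g 0) EA1)
    (hEA1E : ∀ x : R, Ei 0 (EA1 x) = E x)
    -- E_{A₁} agrees with E (valued in B ⊆ A₁) on alternating kernel words
    -- not ending in index 1 (= `0 : Fin 2` here)
    (hEA1word : ∀ (m : ℕ) (ι : ℕ → Fin 2) (x : ℕ → R), 1 ≤ m →
      (∀ k, k + 1 < m → ι k ≠ ι (k + 1)) →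
      (∀ k < m, ∃ a : A (ι k), Ei (ι k) a = 0 ∧ x k = g (ι k) a) →
      ι (m - 1) ≠ 0 →
      EA1 (wordProd x (m - 1)) = ιB 0 (E (wordProd x (m - 1)))) :
    -- conclusion: E_{A₁}(x* x) = E(x* x) for such words x
    ∀ (m : ℕ) (ι : ℕ → Fin 2) (x : ℕ → R), 1 ≤ m →
      (∀ k, k + 1 < m → ι k ≠ ι (k + 1)) →
      (∀ k < m, ∃ a : A (ι k), Ei (ι k) a = 0 ∧ x k = g (ι k) a) →
      ι (m - 1) ≠ 0 →
      EA1 (star (wordProd x (m - 1)) * wordProd x (m - 1))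
        = ιB 0 (E (star (wordProd x (m - 1)) * wordProd x (m - 1))) :=
  reduced_amalg_EA1_of_word_general ιB g hcompat Ei hEi E hE hfree EA1 hEA1 hEA1word
end
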